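/- arXiv:math/0211034 — 5 statements merged into one kernel-verified Lean document; each statement's English description precedes it below -/
import Mathlib

section
/- Let m ≥ 5 be a natural number with m ≠ 6 and m ≠ 9. Then m is prime if and only if m does not divide 4·(m−5)!. -/
lemma mul_dvd_fac' {a b n : ℕ} (ha : 0 < a) (hab : a < b) (hbn : b ≤ n) :
    a * b ∣ Nat.factorial n := by
  have h1 : a * b ∣ Nat.factorial b := by
    have hb : b = (b - 1) + 1 := by omega
    rw [hb, Nat.factorial_succ]
    have h2 : a ∣ Nat.factorial (b - 1) := Nat.dvd_factorial ha (by omega)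
    rw [mul_comm a ((b-1)+1)]
    exact mul_dvd_mul dvd_rfl h2
  exact h1.trans (Nat.factorial_dvd_factorial hbn)

theorem stmt_0 (m : ℕ) (h5 : 5 ≤ m) (h6 : m ≠ 6) (h9 : m ≠ 9) :
    Nat.Prime m ↔ ¬ (m ∣ 4 * Nat.factorial (m - 5)) := by
  rcases lt_or_ge m 10 with hlt | hge
  · interval_cases m <;> simp_all <;> decide
  constructor
  · intro hp hdvd
    rcases (Nat.Prime.dvd_mul hp).mp hdvd with h | h
    · have := Nat.le_of_dvd (by norm_num) h; omega
    · have := (Nat.Prime.dvd_factorial hp).mp h; omega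
  · intro hnd
    by_contra hnp
    apply hnd
    obtain ⟨p, hpdef⟩ : ∃ p, p = m.minFac := ⟨_, rfl⟩
    have hpp : p.Prime := hpdef ▸ Nat.minFac_prime (by omega)
    have hpd : p ∣ m := hpdef ▸ Nat.minFac_dvd m
    obtain ⟨k, hk⟩ := hpd
    have hp2 : 2 ≤ p := hpp.two_le
    have hk2 : 2 ≤ k := by
      rcases Nat.lt_or_ge k 2 with h | h
      · interval_cases k
        · omega
        · rw [Nat.mul_one] at hk; rw [hk] at hnp; exact absurd hpp hnp
      · exact h
    have hpk : p ≤ k := hpdef ▸ Nat.minFac_le_of_dvd hk2 ⟨p, by rw [hk]; ring⟩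
    have h2k : 2 * k ≤ m := by nlinarith
    rcases Nat.lt_or_ge p k with hlt2 | hge2
    · have : m ∣ Nat.factorial (m - 5) := by
        rw [hk]; exact mul_dvd_fac' (by omega) hlt2 (by omega)
      exact this.trans (dvd_mul_left _ _)
    · have hpk' : p = k := le_antisymm hpk hge2
      subst hpk'
      have hp5 : 5 ≤ p := by
        rcases Nat.lt_or_ge p 5 with h | h
        · exfalso; interval_cases p <;> first | omega | exact absurd hpp (by decide)
        · exact h
      have hb : 2 * p + 5 ≤ m := by nlinarith
      have h1 : p * (2 * p) ∣ Nat.factorial (m - 5) :=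
        mul_dvd_fac' (by omega) (by omega) (by omega)
      have h2 : m ∣ p * (2 * p) := ⟨2, by rw [hk]; ring⟩
      exact (h2.trans h1).trans (dvd_mul_left _ _)
end

section
/- If m ≥ 10 is a natural number that is not prime, then m divides 4·(m−5)!. -/
lemma aux_mul_dvd_factorial (a b n : ℕ) (ha : 0 < a) (hab : a < b) (hbn : b ≤ n) :
    a * b ∣ Nat.factorial n := by
  have h1 : a ∣ Nat.factorial (b - 1) := Nat.dvd_factorial ha (by omega)
  have h2 : a * b ∣ Nat.factorial b := by
    have hb : Nat.factorial b = b * Nat.factorial (b - 1) := by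
      conv_lhs => rw [show b = (b - 1) + 1 by omega]
      rw [Nat.factorial_succ]
      congr 1
      omega
    rw [hb, mul_comm a b]
    exact mul_dvd_mul_left b h1
  exact h2.trans (Nat.factorial_dvd_factorial hbn)

theorem stmt_3 (m : ℕ) (h10 : 10 ≤ m) (hnp : ¬ Nat.Prime m) :
    m ∣ 4 * Nat.factorial (m - 5) := by
  set p := m.minFac with hp
  have hm1 : m ≠ 1 := by omega
  have hpp : p.Prime := Nat.minFac_prime hm1
  have hpdvd : p ∣ m := Nat.minFac_dvd m
  obtain ⟨q, hq⟩ := hpdvd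
  have hp0 : 0 < p := hpp.pos
  have hp2 : 2 ≤ p := hpp.two_le
  have hq0 : 0 < q := by
    rcases Nat.eq_zero_or_pos q with h | h
    · subst h; simp at hq; omega
    · exact h
  have hsq : p * p ≤ m := by
    have := Nat.minFac_sq_le_self (by omega : 0 < m) hnp
    simpa [sq] using this
  have hpq : p ≤ q := by
    rw [hq] at hsq
    exact Nat.le_of_mul_le_mul_left hsq hp0
  rcases lt_or_eq_of_le hpq with hlt | heq
  · -- p < q : show q ≤ m - 5
    have hqle : q + 5 ≤ m := by
      rcases Nat.lt_or_ge q 5 with h5 | h5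
      · omega
      · have : 2 * q ≤ p * q := Nat.mul_le_mul_right q hp2
        omega
    have h := aux_mul_dvd_factorial p q (m - 5) hp0 hlt (by omega)
    rw [← hq] at h
    exact h.trans (dvd_mul_left _ 4)
  · -- m = p * p
    subst heq
    have hpp10 : 10 ≤ p * p := hq ▸ h10
    have hp4 : 4 ≤ p := by nlinarith
    have hp5 : 5 ≤ p := by
      rcases Nat.lt_or_ge p 5 with h5 | h5
      · have : p = 4 := by omega
        rw [this] at hpp; norm_num at hpp
      · exact h5
    have h2p : 2 * p + 5 ≤ m := by rw [hq]; nlinarith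
    have h := aux_mul_dvd_factorial p (2 * p) (m - 5) hp0 (by omega) (by omega)
    have hm : m ∣ p * (2 * p) := ⟨2, by rw [hq]; ring⟩
    exact (hm.trans h).trans (dvd_mul_left _ 4)
end

section
/- Let n ≥ 3 be a natural number such that n and n+2 are both prime. Then n divides 4·(n−3)! + n + 2, and n+2 does not divide 4·(n−3)! + n + 2. -/
theorem stmt_9 (n : ℕ) (h3 : 3 ≤ n) (hn : Nat.Prime n) (hn2 : Nat.Prime (n + 2)) :
    n ∣ 4 * Nat.factorial (n - 3) + n + 2 ∧
      ¬ ((n + 2) ∣ 4 * Nat.factorial (n - 3) + n + 2) := by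
  obtain ⟨m, rfl⟩ : ∃ m, n = m + 3 := ⟨n - 3, by omega⟩
  simp only [Nat.add_sub_cancel]
  haveI : Fact (Nat.Prime (m + 3)) := ⟨hn⟩
  haveI : Fact (Nat.Prime (m + 3 + 2)) := ⟨hn2⟩
  constructor
  · refine (ZMod.natCast_eq_zero_iff _ (m + 3)).mp ?_
    have hw := ZMod.wilsons_lemma (m + 3)
    have hf : (m + 3 - 1).factorial = (m + 2) * ((m + 1) * m.factorial) := by
      show (m + 2).factorial = _
      rw [Nat.factorial_succ, Nat.factorial_succ]
    rw [hf] at hw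
    have hm : ((m : ZMod (m + 3))) = -3 := by
      have := ZMod.natCast_self (m + 3)
      push_cast at this
      linear_combination this
    push_cast at hw ⊢
    rw [hm] at hw ⊢
    linear_combination 2 * hw
  · intro h
    have h0 : ((4 * m.factorial + (m + 3) + 2 : ℕ) : ZMod (m + 3 + 2)) = 0 :=
      (ZMod.natCast_eq_zero_iff _ _).mpr h
    have hw := ZMod.wilsons_lemma (m + 3 + 2)
    have hf : (m + 3 + 2 - 1).factorial
        = (m + 4) * ((m + 3) * ((m + 2) * ((m + 1) * m.factorial))) := by
      show (m + 4).factorial = _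
      rw [Nat.factorial_succ, Nat.factorial_succ, Nat.factorial_succ, Nat.factorial_succ]
    rw [hf] at hw
    have hm : ((m : ZMod (m + 3 + 2))) = -5 := by
      have := ZMod.natCast_self (m + 3 + 2)
      push_cast at this
      linear_combination this
    push_cast at hw h0
    rw [hm] at hw h0
    have : (1 : ZMod (m + 3 + 2)) = 0 := by linear_combination hw - 6 * h0
    exact one_ne_zero this
end

section
/- Let n ≥ 3 be a natural number with n ≠ 7. If n divides 4·(n−3)! + n + 2 and n+2 does not divide 4·(n−3)! + n + 2, then both n and n+2 are prime. -/
open Finset in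
lemma aux_mul_dvd_fact {a b m : ℕ} (ha : 1 ≤ a) (hb : 1 ≤ b) (ham : a ≤ m)
    (hbm : b ≤ m) (hab : a ≠ b) : a * b ∣ Nat.factorial m := by
  have hsub : ({a, b} : Finset ℕ) ⊆ Finset.Ico 1 (m + 1) := by
    intro x hx
    simp only [mem_insert, mem_singleton] at hx
    rcases hx with rfl | rfl <;> simp [Finset.mem_Ico] <;> omega
  have hp : (∏ i ∈ ({a, b} : Finset ℕ), i) = a * b :=
    Finset.prod_pair (f := fun i => i) hab
  calc a * b = ∏ i ∈ ({a, b} : Finset ℕ), i := hp.symm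
    _ ∣ ∏ i ∈ Finset.Ico 1 (m + 1), i := Finset.prod_dvd_prod_of_subset _ _ _ hsub
    _ = Nat.factorial m := Finset.prod_Ico_id_eq_factorial m

theorem stmt_10 (n : ℕ) (h3 : 3 ≤ n) (h7 : n ≠ 7)
    (hdvd : n ∣ 4 * Nat.factorial (n - 3) + n + 2)
    (hndvd : ¬ ((n + 2) ∣ 4 * Nat.factorial (n - 3) + n + 2)) :
    Nat.Prime n ∧ Nat.Prime (n + 2) := by
  -- dispatch small cases
  by_cases hsmall : n < 11
  · interval_cases n <;> first
      | (exact absurd rfl h7)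
      | (exfalso; revert hdvd; decide)
      | (constructor <;> norm_num)
  push_neg at hsmall
  obtain ⟨m, rfl⟩ : ∃ m, n = m + 3 := ⟨n - 3, by omega⟩
  have hm8 : 8 ≤ m := by omega
  simp only [Nat.add_sub_cancel] at hdvd hndvd
  -- n is odd
  have hodd : ¬ 2 ∣ (m + 3) := by
    intro h2
    obtain ⟨k, hk⟩ := h2
    have hnf : (m + 3) ∣ Nat.factorial m := by
      rw [hk]
      exact aux_mul_dvd_fact (by omega) (by omega) (by omega) (by omega) (by omega)
    have h2' : (m + 3) ∣ 2 := by
      have := Nat.dvd_sub hdvd (Nat.dvd_add (hnf.mul_left 4) (dvd_refl (m + 3)))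
      simpa [show 4 * Nat.factorial m + (m + 3) + 2 - (4 * Nat.factorial m + (m + 3)) = 2
        from by omega] using this
    have := Nat.le_of_dvd (by norm_num) h2'
    omega
  -- divisibility : m+3 ∣ 4*m! + 2
  have hdvd' : (m + 3) ∣ 4 * Nat.factorial m + 2 := by
    have := Nat.dvd_sub hdvd (dvd_refl (m + 3))
    simpa [show 4 * Nat.factorial m + (m + 3) + 2 - (m + 3) = 4 * Nat.factorial m + 2
      from by omega] using this
  -- Wilson: m+3 prime
  have hkey : (m + 3) ∣ (Nat.factorial (m + 2) + 1) * 4 := by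
    have heq : (Nat.factorial (m + 2) + 1) * 4
        = (m + 3) * (4 * m * Nat.factorial m) + 2 * (4 * Nat.factorial m + 2) := by
      have hfac : Nat.factorial (m + 2) = (m + 2) * ((m + 1) * Nat.factorial m) := by
        rw [Nat.factorial_succ, Nat.factorial_succ]
      rw [hfac]; ring
    rw [heq]
    exact dvd_add (Dvd.intro _ rfl) (hdvd'.mul_left 2)
  have hcop2 : Nat.Coprime (m + 3) 2 :=
    Nat.coprime_comm.mp ((Nat.Prime.coprime_iff_not_dvd Nat.prime_two).mpr hodd)
  have hcop : Nat.Coprime (m + 3) 4 := by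
    have := hcop2.pow_right 2
    norm_num at this
    exact this
  have hwil : (m + 3) ∣ Nat.factorial (m + 2) + 1 := hcop.dvd_of_dvd_mul_right hkey
  have hp1 : Nat.Prime (m + 3) := by
    apply Nat.prime_of_fac_equiv_neg_one _ (by omega)
    have h0 : ((Nat.factorial (m + 2) + 1 : ℕ) : ZMod (m + 3)) = 0 :=
      (ZMod.natCast_eq_zero_iff _ _).mpr hwil
    push_cast at h0
    have h2 : ((Nat.factorial (m + 2) : ℕ) : ZMod (m + 3)) = -1 := by
      linear_combination h0
    simpa [show m + 3 - 1 = m + 2 from rfl] using h2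
  refine ⟨hp1, ?_⟩
  -- n + 2 prime
  by_contra hnp
  have hnp' : ¬ Nat.Prime (m + 5) := by
    have he : m + 3 + 2 = m + 5 := by omega
    rwa [he] at hnp
  apply hndvd
  have hfdvd : (m + 5) ∣ Nat.factorial m := by
    obtain ⟨p, hpdef⟩ : ∃ p, Nat.minFac (m + 5) = p := ⟨_, rfl⟩
    have hpp : p.Prime := hpdef ▸ Nat.minFac_prime (by omega)
    have hpd : p ∣ m + 5 := hpdef ▸ Nat.minFac_dvd (m + 5)
    have hpsq : p * p ≤ m + 5 := by
      have h := Nat.minFac_sq_le_self (by omega) hnp'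
      rw [hpdef] at h
      simpa [sq] using h
    have hp2 : p ≠ 2 := by
      intro h
      rw [h] at hpd
      omega
    have hp3 : 3 ≤ p := by have := hpp.two_le; omega
    obtain ⟨q, hq⟩ := hpd
    have hq1 : 1 ≤ q := by
      rcases Nat.eq_zero_or_pos q with rfl | h
      · omega
      · exact h
    rcases eq_or_ne p q with rfl | hpq
    · -- m + 5 = p * p with p ≥ 5
      have hp4 : 4 ≤ p := by nlinarith
      have hp4' : p ≠ 4 := by
        intro h
        rw [h] at hpp
        norm_num at hpp
      have hp5 : 5 ≤ p := by omega
      have hppm : p ≤ m := by nlinarith [Nat.mul_le_mul_right p hp5]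
      have h2pm : 2 * p ≤ m := by nlinarith [Nat.mul_le_mul_right p hp5]
      have hd2 : p * (2 * p) ∣ Nat.factorial m :=
        aux_mul_dvd_fact (by omega) (by omega) hppm h2pm (by omega)
      have hdd : p * p ∣ p * (2 * p) := ⟨2, by ring⟩
      rw [hq]
      exact hdd.trans hd2
    · have hlt : q < p ∨ p < q := by omega
      rcases hlt with hlt | hlt
      · exfalso
        nlinarith [Nat.mul_le_mul_left p (show q + 1 ≤ p from by omega)]
      · have hqm : q ≤ m := by nlinarith [Nat.mul_le_mul_right q hp3]
        rw [hq]
        exact aux_mul_dvd_fact (by omega) hq1 (by omega) hqm hpq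
  have h1 : m + 3 + 2 = m + 5 := by omega
  rw [h1]
  have h2 : 4 * Nat.factorial m + (m + 3) + 2 = 4 * Nat.factorial m + (m + 5) := by omega
  rw [h2]
  exact dvd_add (hfdvd.mul_left 4) (dvd_refl _)
end

section
/- Let n ≥ 3 be a natural number with n ≠ 4 and n ≠ 7. Then n+2 is prime if and only if n+2 does not divide 4·(n−3)!. -/
lemma mul_dvd_fact_aux {a b k : ℕ} (ha : 1 ≤ a) (hab : a < b) (hbk : b ≤ k) :
    a * b ∣ Nat.factorial k := by
  have h1 : a ∣ Nat.factorial (b - 1) := Nat.dvd_factorial ha (by omega)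
  have h2 : a * b ∣ Nat.factorial b := by
    have hb : Nat.factorial b = b * Nat.factorial (b - 1) := by
      conv_lhs => rw [show b = (b - 1) + 1 by omega]
      rw [Nat.factorial_succ]
      congr 1
      omega
    rw [hb, mul_comm a b]
    exact mul_dvd_mul_left b h1
  exact h2.trans (Nat.factorial_dvd_factorial hbk)

theorem stmt_16 (n : ℕ) (h3 : 3 ≤ n) (h4 : n ≠ 4) (h7 : n ≠ 7) :
    Nat.Prime (n + 2) ↔ ¬ ((n + 2) ∣ 4 * Nat.factorial (n - 3)) := by
  constructor
  · intro hp hdvd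
    rcases (Nat.Prime.dvd_mul hp).mp hdvd with h | h
    · have := Nat.le_of_dvd (by norm_num) h
      omega
    · have := (Nat.Prime.dvd_factorial hp).mp h
      omega
  · intro hnd
    by_contra hp
    apply hnd
    by_cases h6 : n = 6
    · subst h6; decide
    have hm5 : n ≠ 3 := by rintro rfl; exact hp (by norm_num)
    have hm7 : n ≠ 5 := by rintro rfl; exact hp (by norm_num)
    have hn8 : 8 ≤ n := by omega
    obtain ⟨a, hdvd, ha2, halt⟩ := Nat.exists_dvd_of_not_prime2 (by omega) hp
    obtain ⟨b, hb⟩ := hdvd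
    have hb2 : 2 ≤ b := by nlinarith
    have hcd : min a b * max a b = n + 2 := by
      rcases le_total a b with h | h
      · simp [min_eq_left h, max_eq_right h, ← hb]
      · simp [min_eq_right h, max_eq_left h, ← hb, mul_comm]
    set c := min a b with hc
    set d := max a b with hd
    have hc2 : 2 ≤ c := le_min ha2 hb2
    have hcled : c ≤ d := min_le_max
    rcases eq_or_lt_of_le hcled with heq | hlt
    · -- c = d, n + 2 = c^2
      rw [← heq] at hcd
      have hc4 : 4 ≤ c := by nlinarith
      have h1 : c * c ∣ c * (2 * c) := ⟨2, by ring⟩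
      have h2c : 2 * c + 5 ≤ c * c := by nlinarith
      rw [hcd] at h2c
      have h2 : c * (2 * c) ∣ Nat.factorial (n - 3) :=
        mul_dvd_fact_aux (by omega) (by omega) (by omega)
      rw [← hcd]
      exact (h1.trans h2).trans (dvd_mul_left _ 4)
    · have hd5 : d + 5 ≤ c * d := by nlinarith
      rw [hcd] at hd5
      have hdle : d ≤ n - 3 := by omega
      rw [← hcd]
      exact (mul_dvd_fact_aux (by omega) hlt hdle).trans (dvd_mul_left _ 4)
end
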